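/- Let b_0, …, b_n be positive integers. The free abelian group on generators γ_0, γ_1, …, γ_n, equipped with the bilinear multiplication determined by γ_k · γ_m = (ℓ_k·ℓ_m/ℓ_{k+m}) γ_{k+m} when k + m ≤ n and γ_k · γ_m = 0 when k + m > n, is a commutative associative unital ring with unit γ_0. (This is the ring structure of the integral singular cohomology of the weighted projective space ℂP^n_{(b)} as computed by Kawasaki, with γ_k the generator in degree 2k.) -/

import Mathlib

/-- `ell b k` is the number `ℓ_k` of Kawasaki: the least common multiple, over all
`(k+1)`-element subsets `{i_0 < ⋯ < i_k}` of `{0, …, n}`, of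
`b_{i_0} ⋯ b_{i_k} / gcd(b_{i_0}, …, b_{i_k})`.  Note `ell b 0 = 1`. -/
def ell {n : ℕ} (b : Fin (n + 1) → ℕ) (k : ℕ) : ℕ :=
  ((Finset.univ : Finset (Fin (n + 1))).powersetCard (k + 1)).lcm
    (fun s => (∏ i ∈ s, b i) / s.gcd b)

/-- The bilinear multiplication on the free abelian group `ℤ^{n+1}` with basis
`γ_0, …, γ_n` determined by `γ_k · γ_m = (ℓ_k ℓ_m / ℓ_{k+m}) γ_{k+m}` when
`k + m ≤ n` and `γ_k · γ_m = 0` when `k + m > n` (Kawasaki's product on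
`H^*(ℂP^n_{(b)}; ℤ)`, with `γ_k` the generator of degree `2k`). -/
def kawasakiMul {n : ℕ} (b : Fin (n + 1) → ℕ) (x y : Fin (n + 1) → ℤ) :
    Fin (n + 1) → ℤ := fun j =>
  ∑ k : Fin (n + 1), ∑ m : Fin (n + 1),
    if (k : ℕ) + (m : ℕ) = (j : ℕ) then
      x k * y m * ((ell b k * ell b m) / ell b (k + m) : ℕ)
    else 0

/-!
Send `x` to `∑ₖ xₖ ℓₖ Xᵏ` in `ℤ[X]/(X^{n+1})`. Since `ℓ_{k+m} ∣ ℓ_k ℓ_m`, this map carries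
Kawasaki's product to polynomial multiplication, and it is injective because no `ℓ_k`
vanishes; so the product inherits commutativity and associativity from the truncated polynomial
ring, and `γ_0 ↦ ℓ_0 = 1` is the unit.

The divisibility is checked one prime `p` at a time: a `(k+m+1)`-set `S` of indices is the union
of a `(k+1)`-set and an `(m+1)`-set meeting exactly in an index `i` where `v_p(b_i)` is minimal
on `S`. As `v_p(∏_S b / gcd_S b) = ∑_S v_p(b) - v_p(b_i)`, this valuation is the sum of the
corresponding ones for the two parts, which are bounded by `v_p(ℓ_k)` and `v_p(ℓ_m)`.
-/

open Polynomial Finset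

section prodDivGcd

variable {ι : Type*}

def prodDivGcd (b : ι → ℕ) (s : Finset ι) : ℕ := (∏ i ∈ s, b i) / s.gcd b

variable {b : ι → ℕ}

theorem Finset.gcd_dvd_prod_of_mem {s : Finset ι} {i : ι} (hi : i ∈ s) : s.gcd b ∣ ∏ j ∈ s, b j :=
  (gcd_dvd hi).trans (dvd_prod_of_mem b hi)

theorem prodDivGcd_ne_zero {s : Finset ι} (hb : ∀ i ∈ s, b i ≠ 0) (hs : s.Nonempty) :
    prodDivGcd b s ≠ 0 := by
  obtain ⟨i, hi⟩ := hs
  have hprod : ∏ j ∈ s, b j ≠ 0 := prod_ne_zero_iff.mpr hb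
  exact (Nat.div_pos (Nat.le_of_dvd (Nat.pos_of_ne_zero hprod) (gcd_dvd_prod_of_mem hi))
    (Nat.pos_of_ne_zero fun h => hb i hi (gcd_eq_zero_iff.mp h i hi))).ne'

theorem Finset.factorization_gcd_of_forall_le {s : Finset ι} (hb : ∀ i ∈ s, b i ≠ 0) {p : ℕ}
    (hp : p.Prime) {i : ι} (hi : i ∈ s)
    (hmin : ∀ j ∈ s, (b i).factorization p ≤ (b j).factorization p) :
    (s.gcd b).factorization p = (b i).factorization p := by
  have hgcd : s.gcd b ≠ 0 := fun h => hb i hi (gcd_eq_zero_iff.mp h i hi)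
  refine le_antisymm ((Nat.factorization_le_iff_dvd hgcd (hb i hi)).mpr (gcd_dvd hi) p) ?_
  rw [← hp.pow_dvd_iff_le_factorization hgcd]
  exact Finset.dvd_gcd fun j hj => (pow_dvd_pow p (hmin j hj)).trans (Nat.ordProj_dvd _ _)

theorem factorization_prodDivGcd_add {s : Finset ι} (hb : ∀ i ∈ s, b i ≠ 0) {p : ℕ}
    (hp : p.Prime) {i : ι} (hi : i ∈ s)
    (hmin : ∀ j ∈ s, (b i).factorization p ≤ (b j).factorization p) :
    (prodDivGcd b s).factorization p + (b i).factorization p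
      = ∑ j ∈ s, (b j).factorization p := by
  rw [prodDivGcd, Nat.factorization_div (gcd_dvd_prod_of_mem hi), Finsupp.tsub_apply,
    factorization_gcd_of_forall_le hb hp hi hmin, Nat.factorization_prod hb,
    Finsupp.finsetSum_apply]
  exact Nat.sub_add_cancel
    (single_le_sum (f := fun j => (b j).factorization p) (fun j _ => Nat.zero_le _) hi)

end prodDivGcd

theorem Finset.exists_union_eq_inter_eq_singleton {α : Type*} [DecidableEq α] {s : Finset α}
    {i : α} (hi : i ∈ s) {k m : ℕ} (hs : #s = k + m + 1) :
    ∃ A B : Finset α, A ∪ B = s ∧ A ∩ B = {i} ∧ #A = k + 1 ∧ #B = m + 1 := by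
  obtain ⟨A, hA, hAcard⟩ := exists_subset_card_eq (s := s.erase i) (n := k)
    (by rw [card_erase_of_mem hi]; omega)
  have hiA : i ∉ A := fun h => (mem_erase.mp (hA h)).1 rfl
  have hAs : A ⊆ s := hA.trans (erase_subset i s)
  refine ⟨insert i A, s \ A, ?_, ?_, ?_, ?_⟩
  · rw [insert_union, union_sdiff_of_subset hAs, insert_eq_of_mem hi]
  · ext j
    simp only [mem_inter, mem_insert, mem_sdiff, mem_singleton]
    grind
  · rw [card_insert_of_notMem hiA, hAcard]
  · rw [card_sdiff_of_subset hAs, hs, hAcard]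
    omega

section ell

variable {n : ℕ} {b : Fin (n + 1) → ℕ}

theorem prodDivGcd_dvd_ell {s : Finset (Fin (n + 1))} {k : ℕ} (hs : #s = k + 1) :
    prodDivGcd b s ∣ ell b k :=
  Finset.dvd_lcm (mem_powersetCard.mpr ⟨subset_univ s, hs⟩)

theorem ell_ne_zero (hb : ∀ i, b i ≠ 0) (k : ℕ) : ell b k ≠ 0 := by
  rw [Ne, ell, Finset.lcm_eq_zero_iff]
  rintro ⟨s, hs, h0⟩
  rw [mem_powersetCard] at hs
  exact prodDivGcd_ne_zero (fun i _ => hb i) (card_pos.mp (by omega)) h0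

theorem ell_zero (hb : ∀ i, b i ≠ 0) : ell b 0 = 1 := by
  refine Nat.dvd_one.mp (lcm_dvd fun s hs => ?_)
  obtain ⟨i, rfl⟩ := card_eq_one.mp (mem_powersetCard.mp hs).2
  simp [Nat.div_self (Nat.pos_of_ne_zero (hb i))]

theorem factorization_prodDivGcd_le_ell (hb : ∀ i, b i ≠ 0) {s : Finset (Fin (n + 1))} {k : ℕ}
    (hs : #s = k + 1) (p : ℕ) : (prodDivGcd b s).factorization p ≤ (ell b k).factorization p :=
  (Nat.factorization_le_iff_dvd (prodDivGcd_ne_zero (fun i _ => hb i) (card_pos.mp (by omega)))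
    (ell_ne_zero hb k)).mpr (prodDivGcd_dvd_ell hs) p

theorem ell_add_dvd_mul (hb : ∀ i, b i ≠ 0) (k m : ℕ) : ell b (k + m) ∣ ell b k * ell b m := by
  refine lcm_dvd fun s hs => show prodDivGcd b s ∣ _ from ?_
  have hscard : #s = k + m + 1 := (mem_powersetCard.mp hs).2
  have hb' : ∀ t : Finset (Fin (n + 1)), ∀ i ∈ t, b i ≠ 0 := fun _ i _ => hb i
  rw [← Nat.factorization_prime_le_iff_dvd
    (prodDivGcd_ne_zero (hb' s) (card_pos.mp (by omega)))
    (mul_ne_zero (ell_ne_zero hb k) (ell_ne_zero hb m))]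
  intro p hp
  obtain ⟨i, hi, hmin⟩ := s.exists_min_image (fun j => (b j).factorization p)
    (card_pos.mp (by omega))
  obtain ⟨A, B, hunion, hinter, hA, hB⟩ := exists_union_eq_inter_eq_singleton hi hscard
  have hiA : i ∈ A := mem_of_mem_inter_left (hinter ▸ mem_singleton_self i)
  have hiB : i ∈ B := mem_of_mem_inter_right (hinter ▸ mem_singleton_self i)
  have hvA := factorization_prodDivGcd_add (hb' A) hp hiA
    fun j hj => hmin j (hunion ▸ mem_union_left B hj)
  have hvB := factorization_prodDivGcd_add (hb' B) hp hiB
    fun j hj => hmin j (hunion ▸ mem_union_right A hj)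
  have hvS := factorization_prodDivGcd_add (hb' s) hp hi hmin
  have hsum := sum_union_inter (s₁ := A) (s₂ := B) (f := fun j => (b j).factorization p)
  rw [hunion, hinter, sum_singleton] at hsum
  have hleA := factorization_prodDivGcd_le_ell hb hA p
  have hleB := factorization_prodDivGcd_le_ell hb hB p
  rw [Nat.factorization_mul (ell_ne_zero hb k) (ell_ne_zero hb m), Finsupp.add_apply]
  omega

end ell

section truncMul

variable {R : Type*} [CommRing R] {n : ℕ}

def truncMul (c : ℕ → ℕ → R) (x y : Fin (n + 1) → R) : Fin (n + 1) → R := fun j =>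
  ∑ k : Fin (n + 1), ∑ m : Fin (n + 1),
    if (k : ℕ) + (m : ℕ) = (j : ℕ) then x k * y m * c k m else 0

noncomputable def weightedPoly (w : ℕ → R) (x : Fin (n + 1) → R) : R[X] :=
  ∑ k : Fin (n + 1), monomial k (x k * w k)

noncomputable def weightedEmbed (w : ℕ → R) (x : Fin (n + 1) → R) :
    R[X] ⧸ Ideal.span {(X : R[X]) ^ (n + 1)} :=
  Ideal.Quotient.mk _ (weightedPoly w x)

variable {c : ℕ → ℕ → R} {w : ℕ → R}

theorem coeff_weightedPoly (x : Fin (n + 1) → R) (k : Fin (n + 1)) :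
    (weightedPoly w x).coeff k = x k * w k := by
  simp only [weightedPoly, finsetSum_coeff, coeff_monomial, Fin.val_inj, sum_ite_eq', mem_univ,
    if_true]

theorem coeff_weightedPoly_mul (x y : Fin (n + 1) → R) (j : ℕ) :
    (weightedPoly w x * weightedPoly w y).coeff j = ∑ k : Fin (n + 1), ∑ m : Fin (n + 1),
      if (k : ℕ) + (m : ℕ) = j then x k * w k * (y m * w m) else 0 := by
  simp only [weightedPoly, sum_mul_sum, finsetSum_coeff, monomial_mul_monomial, coeff_monomial]

theorem coeff_weightedPoly_truncMul (hc : ∀ k m, k + m ≤ n → c k m * w (k + m) = w k * w m)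
    (x y : Fin (n + 1) → R) (j : Fin (n + 1)) :
    (weightedPoly w (truncMul c x y)).coeff j = (weightedPoly w x * weightedPoly w y).coeff j := by
  rw [coeff_weightedPoly, coeff_weightedPoly_mul, truncMul, sum_mul]
  refine sum_congr rfl fun k _ => ?_
  rw [sum_mul]
  refine sum_congr rfl fun m _ => ?_
  split_ifs with h
  · rw [← h, mul_assoc, hc k m (h ▸ j.is_le)]
    ring
  · rw [zero_mul]

theorem Polynomial.mk_span_X_pow_eq_iff {N : ℕ} {p q : R[X]} :
    Ideal.Quotient.mk (Ideal.span {X ^ N}) p = Ideal.Quotient.mk _ q ↔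
      ∀ i < N, p.coeff i = q.coeff i := by
  simp only [Ideal.Quotient.eq, Ideal.mem_span_singleton, X_pow_dvd_iff, coeff_sub, sub_eq_zero]

theorem weightedEmbed_injective [NoZeroDivisors R] (hw : ∀ k ≤ n, w k ≠ 0) :
    Function.Injective (weightedEmbed (n := n) w) := by
  intro x y h
  funext k
  have hk := mk_span_X_pow_eq_iff.mp h k k.isLt
  rw [coeff_weightedPoly, coeff_weightedPoly] at hk
  exact mul_right_cancel₀ (hw k k.is_le) hk

theorem weightedEmbed_truncMul (hc : ∀ k m, k + m ≤ n → c k m * w (k + m) = w k * w m)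
    (x y : Fin (n + 1) → R) :
    weightedEmbed w (truncMul c x y) = weightedEmbed w x * weightedEmbed w y := by
  rw [weightedEmbed, weightedEmbed, weightedEmbed, ← map_mul, mk_span_X_pow_eq_iff]
  exact fun i hi => coeff_weightedPoly_truncMul hc x y ⟨i, hi⟩

theorem weightedEmbed_single_zero (hw : w 0 = 1) :
    weightedEmbed w (Pi.single 0 1 : Fin (n + 1) → R) = 1 := by
  rw [weightedEmbed, weightedPoly, sum_eq_single 0]
  · simp [hw]
  · intro k _ hk
    rw [Pi.single_eq_of_ne hk, zero_mul, monomial_zero_right]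
  · simp

theorem truncMul_add (x y z : Fin (n + 1) → R) :
    truncMul c x (y + z) = truncMul c x y + truncMul c x z := by
  funext j
  simp only [truncMul, Pi.add_apply, ← sum_add_distrib]
  refine sum_congr rfl fun k _ => sum_congr rfl fun m _ => ?_
  split_ifs <;> ring

theorem add_truncMul (x y z : Fin (n + 1) → R) :
    truncMul c (x + y) z = truncMul c x z + truncMul c y z := by
  funext j
  simp only [truncMul, Pi.add_apply, ← sum_add_distrib]
  refine sum_congr rfl fun k _ => sum_congr rfl fun m _ => ?_
  split_ifs <;> ring

variable [NoZeroDivisors R] (hc : ∀ k m, k + m ≤ n → c k m * w (k + m) = w k * w m)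
  (hw : ∀ k ≤ n, w k ≠ 0)
include hc hw

theorem truncMul_comm (x y : Fin (n + 1) → R) : truncMul c x y = truncMul c y x :=
  weightedEmbed_injective hw <| by
    rw [weightedEmbed_truncMul hc, weightedEmbed_truncMul hc, mul_comm]

theorem truncMul_assoc (x y z : Fin (n + 1) → R) :
    truncMul c (truncMul c x y) z = truncMul c x (truncMul c y z) :=
  weightedEmbed_injective hw <| by
    simp only [weightedEmbed_truncMul hc, mul_assoc]

theorem single_zero_truncMul (hw0 : w 0 = 1) (x : Fin (n + 1) → R) :
    truncMul c (Pi.single 0 1) x = x :=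
  weightedEmbed_injective hw <| by
    rw [weightedEmbed_truncMul hc, weightedEmbed_single_zero hw0, one_mul]

theorem truncMul_single_zero (hw0 : w 0 = 1) (x : Fin (n + 1) → R) :
    truncMul c x (Pi.single 0 1) = x :=
  (truncMul_comm hc hw x _).trans (single_zero_truncMul hc hw hw0 x)

end truncMul

/-- for positive integers `b_0, …, b_n`, the free abelian group on
`γ_0, …, γ_n` with the multiplication `γ_k · γ_m = (ℓ_k ℓ_m / ℓ_{k+m}) γ_{k+m}`
(for `k + m ≤ n`; zero otherwise) is a commutative, associative, unital
(distributive) ring with unit `γ_0`. -/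
theorem kawasakiMul_commRing {n : ℕ} (b : Fin (n + 1) → ℕ) (hb : ∀ i, 0 < b i) :
    (∀ x y, kawasakiMul b x y = kawasakiMul b y x) ∧
    (∀ x y z, kawasakiMul b (kawasakiMul b x y) z
        = kawasakiMul b x (kawasakiMul b y z)) ∧
    (∀ x y z, kawasakiMul b x (y + z) = kawasakiMul b x y + kawasakiMul b x z) ∧
    (∀ x y z, kawasakiMul b (x + y) z = kawasakiMul b x z + kawasakiMul b y z) ∧
    (∀ x, kawasakiMul b (Pi.single 0 1) x = x) ∧
    (∀ x, kawasakiMul b x (Pi.single 0 1) = x) := by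
  have hb' : ∀ i, b i ≠ 0 := fun i => (hb i).ne'
  have hmul : kawasakiMul b =
      truncMul fun k m => ((ell b k * ell b m / ell b (k + m) : ℕ) : ℤ) := rfl
  have hc : ∀ k m, k + m ≤ n → ((ell b k * ell b m / ell b (k + m) : ℕ) : ℤ) * ell b (k + m)
      = ell b k * ell b m := fun k m _ => by
    exact_mod_cast Nat.div_mul_cancel (ell_add_dvd_mul hb' k m)
  have hw : ∀ k ≤ n, (ell b k : ℤ) ≠ 0 := fun k _ => Nat.cast_ne_zero.mpr (ell_ne_zero hb' k)
  have hw0 : (ell b 0 : ℤ) = 1 := by rw [ell_zero hb', Nat.cast_one]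
  rw [hmul]
  exact ⟨truncMul_comm hc hw, truncMul_assoc hc hw, truncMul_add, add_truncMul,
    single_zero_truncMul hc hw hw0, truncMul_single_zero hc hw hw0⟩
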